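/- Every wald topology E' with fewer than 2N−3 splits can be extended: there exists a wald topology E with |E| = |E'| + 1 and E' < E. -/

import Mathlib

attribute [local instance] Classical.propDecidable

/-- A split: an unordered pair of finite sets of labels. -/
abbrev Split (N : ℕ) := Sym2 (Finset (Fin N))

namespace Wald

variable {N : ℕ}

/-- `e` is a split of the block `M`: `e = {A, B}` with `A, B` a partition of `M`
into two nonempty parts. -/
def IsSplitOf (e : Split N) (M : Finset (Fin N)) : Prop :=
  ∃ A B : Finset (Fin N), e = s(A, B) ∧ A ∪ B = M ∧ Disjoint A B ∧
    A.Nonempty ∧ B.Nonempty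

/-- Two splits `A|B` and `C|D` are compatible if one of the four intersections
`A∩C, A∩D, B∩C, B∩D` is empty. -/
def Compatible (e f : Split N) : Prop :=
  ∃ A B C D : Finset (Fin N), e = s(A, B) ∧ f = s(C, D) ∧
    (A ∩ C = ∅ ∨ A ∩ D = ∅ ∨ B ∩ C = ∅ ∨ B ∩ D = ∅)

/-- The split `e = A|B` separates `u` and `v` if `u ∈ A` and `v ∈ B` (or vice versa). -/
def Separates (e : Split N) (u v : Fin N) : Prop :=
  ∃ A B : Finset (Fin N), e = s(A, B) ∧ u ∈ A ∧ v ∈ B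

/-- The restriction `e|_{L'}` of a split `e = A|B`: `(A ∩ L')|(B ∩ L')`. -/
def restrict (e : Split N) (L' : Finset (Fin N)) : Split N :=
  Sym2.map (· ∩ L') e

/-- The underlying block `A ∪ B` of a split `e = A|B`. -/
def blockOf (e : Split N) : Finset (Fin N) :=
  Sym2.lift ⟨fun A B => A ∪ B, fun _ _ => Finset.union_comm _ _⟩ e

/-- The restriction of `e = A|B` to `L'` is a valid split iff both
`A ∩ L'` and `B ∩ L'` are nonempty. -/
def ValidRestrict (e : Split N) (L' : Finset (Fin N)) : Prop :=
  ∃ A B : Finset (Fin N), e = s(A, B) ∧ (A ∩ L').Nonempty ∧ (B ∩ L').Nonempty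

/-- A wald topology on the label set `{1,…,N}`: a partition of the labels into
blocks, together with a set of splits of the blocks, such that splits of a common
block are pairwise compatible and any two distinct labels of a common block are
separated by some split. -/
structure WaldTop (N : ℕ) where
  blocks : Finset (Finset (Fin N))
  splits : Finset (Split N)
  nonempty_blocks : ∀ B ∈ blocks, B.Nonempty
  cover : ∀ u : Fin N, ∃! B, B ∈ blocks ∧ u ∈ B
  split_mem : ∀ e ∈ splits, ∃ B ∈ blocks, IsSplitOf e B
  compat : ∀ e ∈ splits, ∀ f ∈ splits, blockOf e = blockOf f → Compatible e f
  separating : ∀ B ∈ blocks, ∀ u ∈ B, ∀ v ∈ B, u ≠ v →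
    ∃ e ∈ splits, Separates e u v

/-- The partial order `E' ≤ E` on wald topologies: refinement of the leaf
partitions, restriction of splits, and the cut property. -/
def LE' (E' E : WaldTop N) : Prop :=
  (∀ B' ∈ E'.blocks, ∃ B ∈ E.blocks, B' ⊆ B) ∧
  (∀ e' ∈ E'.splits, ∃ e ∈ E.splits, restrict e (blockOf e') = e') ∧
  (∀ B₁ ∈ E'.blocks, ∀ B₂ ∈ E'.blocks, B₁ ≠ B₂ →
    ∀ B ∈ E.blocks, B₁ ⊆ B → B₂ ⊆ B →
      ∃ A C : Finset (Fin N), s(A, C) ∈ E.splits ∧ B₁ ⊆ A ∧ B₂ ⊆ C)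

/-- `R_{e'}`: the splits of `E` whose restriction to the block of `e'` equals `e'`. -/
def Rset (E : WaldTop N) (e' : Split N) : Set (Split N) :=
  {e | e ∈ E.splits ∧ restrict e (blockOf e') = e'}

/-- `R_dis`: the splits of `E` admitting a valid restriction to some block of `E'`
which does not belong to `E'`. -/
def Rdis (E' E : WaldTop N) : Set (Split N) :=
  {e | e ∈ E.splits ∧ ∃ B' ∈ E'.blocks, ValidRestrict e B' ∧ restrict e B' ∉ E'.splits}

/-- `R_cut`: the splits of `E` admitting no valid restriction to any block of `E'`. -/
def Rcut (E' E : WaldTop N) : Set (Split N) :=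
  {e | e ∈ E.splits ∧ ∀ B' ∈ E'.blocks, ¬ ValidRestrict e B'}

/-- `E(u,v)`: the set of splits of `E` separating `u` and `v`. -/
def sepSet (E : WaldTop N) (u v : Fin N) : Set (Split N) :=
  {e | e ∈ E.splits ∧ Separates e u v}

end Wald


/-!
If `E'` has two distinct blocks `B₁ ∋ u` and `B₂ ∋ v`, merge them: the split `B₁ | B₂` is new,
and every old split of `B₁` (resp. `B₂`) is extended by attaching `B₂` (resp. `B₁`) to its side
through `u` (resp. `v`). The extended splits restrict back to the old ones, which makes the
extension injective, and all of them keep a side inside an old block avoiding the roots, which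
keeps them pairwise compatible.

If `E'` has the single block `{1,…,N}`, fix a label `r`: a split `A | Aᶜ` with `r ∉ A` is
determined by `A`, and compatibility of two such splits means that their sides avoiding `r`
are nested or disjoint. So the splits form a laminar family of nonempty subsets of the other
`N - 1` labels, and a laminar family with fewer than `2(N - 1) - 1 = 2N - 3` members can be
enlarged.
-/

namespace Finset

variable {α : Type*}

def Nested (A B : Finset α) : Prop := A ⊆ B ∨ B ⊆ A ∨ Disjoint A B

theorem exists_ssubset_forall_subset_or_disjoint {Y : Finset α} {F : Finset (Finset α)}
    (hsub : ∀ A ∈ F, A ⊆ Y) (hne : ∀ A ∈ F, A.Nonempty) (hlam : ∀ A ∈ F, ∀ B ∈ F, Nested A B)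
    (hY : 2 ≤ Y.card) :
    ∃ D ⊂ Y, D.Nonempty ∧ ∀ A ∈ F, A = Y ∨ A ⊆ D ∨ Disjoint A D := by
  by_cases hF : (F.erase Y).Nonempty
  · obtain ⟨D, hD, hmax⟩ := exists_max_image _ card hF
    obtain ⟨hDY, hDF⟩ := mem_erase.mp hD
    refine ⟨D, ssubset_of_subset_of_ne (hsub D hDF) hDY, hne D hDF, fun A hA => ?_⟩
    by_cases hAY : A = Y
    · exact Or.inl hAY
    rcases hlam A hA D hDF with h | h | h
    · exact Or.inr (Or.inl h)
    · exact Or.inr (Or.inl (eq_of_subset_of_card_le h (hmax A (mem_erase.mpr ⟨hAY, hA⟩))).ge)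
    · exact Or.inr (Or.inr h)
  · obtain ⟨y, hy⟩ : Y.Nonempty := card_pos.mp (by omega)
    refine ⟨{y}, ?_, singleton_nonempty y, fun A hA => Or.inl ?_⟩
    · refine ssubset_of_subset_of_ne (singleton_subset_iff.mpr hy) fun h => ?_
      simp [← h] at hY
    · by_contra hAY
      exact hF ⟨A, mem_erase.mpr ⟨hAY, hA⟩⟩

theorem card_filter_subset_add_card_filter_subset_sdiff_lt {Y D : Finset α}
    {F : Finset (Finset α)} (hne : ∀ A ∈ F, A.Nonempty) (hYF : Y ∈ F) (hDY : D ⊂ Y)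
    (hDne : D.Nonempty) : (F.filter (· ⊆ D)).card + (F.filter (· ⊆ Y \ D)).card < F.card := by
  have hdisj : Disjoint (F.filter (· ⊆ D)) (F.filter (· ⊆ Y \ D)) := by
    refine disjoint_filter.mpr fun A hA hAD hAYD => ?_
    obtain ⟨x, hx⟩ := hne A hA
    exact (mem_sdiff.mp (hAYD hx)).2 (hAD hx)
  have hY : Y ∉ F.filter (· ⊆ D) ∪ F.filter (· ⊆ Y \ D) := by
    simp only [mem_union, mem_filter, not_or, not_and]
    refine ⟨fun _ h => hDY.not_subset h, fun _ h => ?_⟩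
    obtain ⟨x, hx⟩ := hDne
    exact (mem_sdiff.mp (h (hDY.subset hx))).2 hx
  rw [← card_union_of_disjoint hdisj, Nat.lt_iff_add_one_le, ← card_insert_of_notMem hY]
  exact card_le_card (insert_subset hYF (union_subset (filter_subset _ _) (filter_subset _ _)))

/-- Cutting `Y` along a maximal proper member `D` leaves at most `|F| - 1` members inside `D` or
`Y \ D`, so one of the two parts is again below the bound. -/
theorem exists_nested_not_mem {Y : Finset α} {F : Finset (Finset α)}
    (hsub : ∀ A ∈ F, A ⊆ Y) (hne : ∀ A ∈ F, A.Nonempty) (hlam : ∀ A ∈ F, ∀ B ∈ F, Nested A B)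
    (hcard : F.card < 2 * Y.card - 1) :
    ∃ C ⊆ Y, C.Nonempty ∧ C ∉ F ∧ ∀ A ∈ F, Nested C A := by
  induction Y using strongInduction generalizing F with
  | H Y ih =>
  by_cases hYF : Y ∉ F
  · exact ⟨Y, subset_rfl, card_pos.mp (by omega), hYF,
      fun A hA => Or.inr (Or.inl (hsub A hA))⟩
  push Not at hYF
  obtain ⟨D, hDY, hDne, hpart⟩ := exists_ssubset_forall_subset_or_disjoint hsub hne hlam
    (by have := card_pos.mpr ⟨Y, hYF⟩; omega)
  have hpart' : ∀ A ∈ F, A = Y ∨ A ⊆ Y \ D ∨ Disjoint A (Y \ D) := by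
    intro A hA
    rcases hpart A hA with h | h | h
    · exact Or.inl h
    · exact Or.inr (Or.inr (disjoint_sdiff.mono_left h))
    · exact Or.inr (Or.inl (subset_sdiff.mpr ⟨hsub A hA, h⟩))
  have descend : ∀ Z ⊂ Y, (∀ A ∈ F, A = Y ∨ A ⊆ Z ∨ Disjoint A Z) →
      (F.filter (· ⊆ Z)).card < 2 * Z.card - 1 →
      ∃ C ⊆ Y, C.Nonempty ∧ C ∉ F ∧ ∀ A ∈ F, Nested C A := by
    intro Z hZY hZ hZcard
    obtain ⟨C, hCZ, hCne, hCF, hC⟩ := ih Z hZY (F := F.filter (· ⊆ Z))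
      (fun A hA => (mem_filter.mp hA).2) (fun A hA => hne A (mem_filter.mp hA).1)
      (fun A hA B hB => hlam A (mem_filter.mp hA).1 B (mem_filter.mp hB).1) hZcard
    refine ⟨C, hCZ.trans hZY.subset, hCne, fun h => hCF (mem_filter.mpr ⟨h, hCZ⟩), ?_⟩
    intro A hA
    rcases hZ A hA with rfl | h | h
    · exact Or.inl (hCZ.trans hZY.subset)
    · exact hC A (mem_filter.mpr ⟨hA, h⟩)
    · exact Or.inr (Or.inr (h.symm.mono_left hCZ))
  have hcount := card_filter_subset_add_card_filter_subset_sdiff_lt hne hYF hDY hDne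
  have hYD : (Y \ D).card + D.card = Y.card := card_sdiff_add_card_eq_card hDY.subset
  have hYDne : 0 < (Y \ D).card := card_pos.mpr (sdiff_nonempty.mpr hDY.not_subset)
  have hDpos : 0 < D.card := card_pos.mpr hDne
  by_cases hDcard : (F.filter (· ⊆ D)).card < 2 * D.card - 1
  · exact descend D hDY hpart hDcard
  · exact descend (Y \ D) (sdiff_ssubset hDY.subset hDne) hpart' (by omega)

end Finset

namespace Wald

open Finset

variable {N : ℕ}

@[simp] lemma blockOf_mk (A B : Finset (Fin N)) : blockOf s(A, B) = A ∪ B := rfl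

@[simp] lemma restrict_mk (A B L : Finset (Fin N)) :
    restrict s(A, B) L = s(A ∩ L, B ∩ L) := rfl

lemma subset_blockOf {e : Split N} {S : Finset (Fin N)} (hS : S ∈ e) : S ⊆ blockOf e := by
  induction e using Sym2.ind with
  | h A B => rcases Sym2.mem_iff.mp hS with rfl | rfl <;> simp

lemma restrict_blockOf (e : Split N) : restrict e (blockOf e) = e := by
  conv_rhs => rw [← id_eq e, ← Sym2.map_id]
  exact Sym2.map_congr fun S hS => inter_eq_left.mpr (subset_blockOf hS)

lemma compatible_mk_iff {A B C D : Finset (Fin N)} :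
    Compatible s(A, B) s(C, D) ↔
      Disjoint A C ∨ Disjoint A D ∨ Disjoint B C ∨ Disjoint B D := by
  simp only [Compatible, ← disjoint_iff_inter_eq_empty]
  refine ⟨fun ⟨A', B', C', D', he, hf, h⟩ => ?_, fun h => ⟨A, B, C, D, rfl, rfl, h⟩⟩
  rcases Sym2.eq_iff.mp he with ⟨rfl, rfl⟩ | ⟨rfl, rfl⟩ <;>
    rcases Sym2.eq_iff.mp hf with ⟨rfl, rfl⟩ | ⟨rfl, rfl⟩ <;> tauto

lemma Compatible.symm {e f : Split N} (h : Compatible e f) : Compatible f e := by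
  induction e using Sym2.ind with | h A B =>
  induction f using Sym2.ind with | h C D =>
  rw [compatible_mk_iff] at h ⊢
  simp only [disjoint_comm (a := A), disjoint_comm (a := B)] at h
  tauto

lemma Compatible.union {A C A' C' X : Finset (Fin N)} (h : Compatible s(A, C) s(A', C'))
    (hA : Disjoint A X) (hA' : Disjoint A' X) (hX : X.Nonempty → ¬ Disjoint C C') :
    Compatible s(A, C ∪ X) s(A', C' ∪ X) := by
  rw [compatible_mk_iff] at h ⊢
  rcases h with h | h | h | h
  · exact Or.inl h
  · exact Or.inr (Or.inl (disjoint_union_right.mpr ⟨h, hA⟩))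
  · exact Or.inr (Or.inr (Or.inl (disjoint_union_left.mpr ⟨h, hA'.symm⟩)))
  · obtain rfl | hX' := X.eq_empty_or_nonempty
    · simp [h]
    · exact absurd h (hX hX')

lemma IsSplitOf.blockOf_eq {e : Split N} {B : Finset (Fin N)} (h : IsSplitOf e B) :
    blockOf e = B := by
  obtain ⟨A, C, rfl, hAC, -⟩ := h
  exact hAC

lemma IsSplitOf.compatible_self {e : Split N} {B : Finset (Fin N)} (h : IsSplitOf e B) :
    Compatible e e := by
  obtain ⟨A, C, rfl, -, hdisj, -⟩ := h
  exact compatible_mk_iff.mpr (Or.inr (Or.inl hdisj))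

lemma IsSplitOf.empty_notMem {e : Split N} {B : Finset (Fin N)} (h : IsSplitOf e B) :
    (∅ : Finset (Fin N)) ∉ e := by
  obtain ⟨A, C, rfl, -, -, hA, hC⟩ := h
  rw [Sym2.mem_iff, not_or]
  exact ⟨hA.ne_empty.symm, hC.ne_empty.symm⟩

lemma IsSplitOf.exists_mk_of_mem {e : Split N} {B : Finset (Fin N)} (h : IsSplitOf e B)
    {w : Fin N} (hw : w ∈ B) :
    ∃ A C, e = s(A, C) ∧ A ∪ C = B ∧ Disjoint A C ∧ A.Nonempty ∧ C.Nonempty ∧ w ∈ C := by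
  obtain ⟨A, C, rfl, hAC, hdisj, hA, hC⟩ := h
  rcases mem_union.mp (hAC ▸ hw) with hwA | hwC
  · exact ⟨C, A, Sym2.eq_swap, by rwa [union_comm], hdisj.symm, hC, hA, hwA⟩
  · exact ⟨A, C, rfl, hAC, hdisj, hA, hC, hwC⟩

namespace WaldTop

variable (E : WaldTop N)

lemma eq_of_mem_of_mem {B B' : Finset (Fin N)} (hB : B ∈ E.blocks) (hB' : B' ∈ E.blocks)
    {x : Fin N} (hx : x ∈ B) (hx' : x ∈ B') : B = B' :=
  (E.cover x).unique ⟨hB, hx⟩ ⟨hB', hx'⟩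

lemma disjoint_of_ne {B B' : Finset (Fin N)} (hB : B ∈ E.blocks) (hB' : B' ∈ E.blocks)
    (h : B ≠ B') : Disjoint B B' :=
  disjoint_left.mpr fun _ hx hx' => h (E.eq_of_mem_of_mem hB hB' hx hx')

lemma eq_of_subset {B B' : Finset (Fin N)} (hB : B ∈ E.blocks) (hB' : B' ∈ E.blocks)
    (h : B ⊆ B') : B = B' :=
  let ⟨_, hx⟩ := E.nonempty_blocks B hB
  E.eq_of_mem_of_mem hB hB' hx (h hx)

lemma ne_of_card_splits {E' : WaldTop N} (h : E'.splits.card = E.splits.card + 1) : E' ≠ E := by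
  rintro rfl
  omega

lemma eq_univ_of_blocks_eq {B : Finset (Fin N)} (h : E.blocks = {B}) : B = univ :=
  eq_univ_of_forall fun x =>
    let ⟨_, ⟨hB, hx⟩, _⟩ := E.cover x
    mem_singleton.mp (h ▸ hB) ▸ hx

lemma isSplitOf_blockOf {e : Split N} (he : e ∈ E.splits) :
    blockOf e ∈ E.blocks ∧ IsSplitOf e (blockOf e) := by
  obtain ⟨B, hB, hs⟩ := E.split_mem e he
  rw [hs.blockOf_eq]
  exact ⟨hB, hs⟩

end WaldTop

theorem WaldTop.exists_extension_of_isSplitOf (E : WaldTop N) {B : Finset (Fin N)}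
    {e₀ : Split N} (hB : B ∈ E.blocks) (he₀ : IsSplitOf e₀ B) (hnew : e₀ ∉ E.splits)
    (hcompat : ∀ f ∈ E.splits, blockOf f = B → Compatible e₀ f) :
    ∃ E' : WaldTop N, E'.splits.card = E.splits.card + 1 ∧ LE' E E' ∧ E' ≠ E := by
  have hcard : (insert e₀ E.splits).card = E.splits.card + 1 := card_insert_of_notMem hnew
  refine ⟨⟨E.blocks, insert e₀ E.splits, E.nonempty_blocks, E.cover, ?_, ?_, ?_⟩,
    hcard, ⟨?_, ?_, ?_⟩, ?_⟩
  · intro e he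
    rcases mem_insert.mp he with rfl | he
    · exact ⟨B, hB, he₀⟩
    · exact E.split_mem e he
  · intro e he f hf hef
    rcases mem_insert.mp he with rfl | he' <;> rcases mem_insert.mp hf with rfl | hf'
    · exact he₀.compatible_self
    · exact hcompat f hf' (hef ▸ he₀.blockOf_eq)
    · exact (hcompat e he' (hef.symm ▸ he₀.blockOf_eq)).symm
    · exact E.compat e he' f hf' hef
  · intro B' hB' x hx y hy hxy
    obtain ⟨e, he, hsep⟩ := E.separating B' hB' x hx y hy hxy
    exact ⟨e, mem_insert_of_mem he, hsep⟩
  · exact fun B' hB' => ⟨B', hB', subset_rfl⟩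
  · exact fun e he => ⟨e, mem_insert_of_mem he, restrict_blockOf e⟩
  · intro B₁ hB₁ B₂ hB₂ h12 B' hB' h1 h2
    exact absurd ((E.eq_of_subset hB₁ hB' h1).trans (E.eq_of_subset hB₂ hB' h2).symm) h12
  · exact E.ne_of_card_splits hcard

lemma IsSplitOf.exists_eq_mk_compl {e : Split N} (h : IsSplitOf e univ) (r : Fin N) :
    ∃ A, e = s(A, Aᶜ) ∧ r ∉ A := by
  obtain ⟨A, C, rfl, hAC, hdisj, -, -, hrC⟩ := h.exists_mk_of_mem (mem_univ r)
  refine ⟨A, ?_, disjoint_right.mp hdisj hrC⟩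
  rw [(isCompl_iff.mpr ⟨hdisj, codisjoint_iff.mpr hAC⟩).compl_eq]

lemma injOn_mk_compl (r : Fin N) :
    Set.InjOn (fun A : Finset (Fin N) => (s(A, Aᶜ) : Split N)) {A | r ∉ A} := by
  intro A hA A' hA' h
  rcases Sym2.eq_iff.mp h with ⟨h, -⟩ | ⟨h, -⟩
  · exact h
  · exact absurd (h ▸ mem_compl.mpr hA') hA

lemma compatible_mk_compl_iff {r : Fin N} {X Z : Finset (Fin N)} (hX : r ∉ X) (hZ : r ∉ Z) :
    Compatible s(X, Xᶜ) s(Z, Zᶜ) ↔ Nested X Z := by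
  have hXZ : ¬ Disjoint Xᶜ Zᶜ := not_disjoint_iff.mpr ⟨r, mem_compl.mpr hX, mem_compl.mpr hZ⟩
  rw [compatible_mk_iff, disjoint_compl_right_iff, disjoint_compl_left_iff, Nested]
  tauto

theorem WaldTop.exists_extension_of_blocks_eq (E : WaldTop N) (hb : E.blocks = {univ})
    (hcard : E.splits.card < 2 * N - 3) :
    ∃ E' : WaldTop N, E'.splits.card = E.splits.card + 1 ∧ LE' E E' ∧ E' ≠ E := by
  obtain ⟨r⟩ : Nonempty (Fin N) := ⟨⟨0, by omega⟩⟩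
  have hsplit : ∀ f ∈ E.splits, ∃ Z, f = s(Z, Zᶜ) ∧ r ∉ Z := fun f hf => by
    obtain ⟨B, hB, hs⟩ := E.split_mem f hf
    rw [hb, mem_singleton] at hB
    exact (hB ▸ hs).exists_eq_mk_compl r
  set F := univ.filter fun A => r ∉ A ∧ s(A, Aᶜ) ∈ E.splits
  have hF : ∀ {A}, A ∈ F ↔ r ∉ A ∧ s(A, Aᶜ) ∈ E.splits := by simp [F]
  have hFcard : F.card ≤ E.splits.card :=
    card_le_card_of_injOn _ (fun A hA => (hF.mp hA).2)
      ((injOn_mk_compl r).mono fun A hA => (hF.mp hA).1)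
  have hFne : ∀ A ∈ F, A.Nonempty := fun A hA => by
    obtain ⟨B, -, hs⟩ := E.split_mem _ (hF.mp hA).2
    exact nonempty_iff_ne_empty.mpr fun h => hs.empty_notMem (h ▸ Sym2.mem_mk_left _ _)
  have hFlam : ∀ A ∈ F, ∀ A' ∈ F, Nested A A' := fun A hA A' hA' =>
    (compatible_mk_compl_iff (hF.mp hA).1 (hF.mp hA').1).mp
      (E.compat _ (hF.mp hA).2 _ (hF.mp hA').2 (by simp))
  obtain ⟨C, hCr, hCne, hCF, hC⟩ := exists_nested_not_mem (Y := univ.erase r)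
    (fun A hA => subset_erase.mpr ⟨subset_univ A, (hF.mp hA).1⟩) hFne hFlam
    (by rw [card_erase_of_mem (mem_univ r), card_univ, Fintype.card_fin]; omega)
  have hr : r ∉ C := fun h => by simpa using hCr h
  refine E.exists_extension_of_isSplitOf (by simp [hb])
    ⟨C, Cᶜ, rfl, union_compl C, disjoint_compl_right, hCne, ⟨r, mem_compl.mpr hr⟩⟩
    (fun h => hCF (hF.mpr ⟨hr, h⟩)) fun f hf _ => ?_
  obtain ⟨Z, rfl, hZ⟩ := hsplit f hf
  exact (compatible_mk_compl_iff hr hZ).mpr (hC Z (hF.mpr ⟨hZ, hf⟩))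

structure WaldTop.RootedPair (E : WaldTop N) where
  B₁ : Finset (Fin N)
  B₂ : Finset (Fin N)
  u : Fin N
  v : Fin N
  mem₁ : B₁ ∈ E.blocks
  mem₂ : B₂ ∈ E.blocks
  ne : B₁ ≠ B₂
  root₁ : u ∈ B₁
  root₂ : v ∈ B₂

namespace WaldTop.RootedPair

variable {E : WaldTop N} (P : E.RootedPair)

/-- What the side `S` of a split absorbs when `B₁` and `B₂` are merged: the side through the
root of one block receives the other block. -/
def attachment (S : Finset (Fin N)) : Finset (Fin N) :=
  if P.u ∈ S then P.B₂ else if P.v ∈ S then P.B₁ else ∅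

def graft (e : Split N) : Split N := e.map fun S => S ∪ P.attachment S

def blocks : Finset (Finset (Fin N)) := insert (P.B₁ ∪ P.B₂) ((E.blocks.erase P.B₁).erase P.B₂)

def splits : Finset (Split N) := insert s(P.B₁, P.B₂) (E.splits.image P.graft)

lemma mem_blocks {B : Finset (Fin N)} :
    B ∈ P.blocks ↔ B = P.B₁ ∪ P.B₂ ∨ (B ∈ E.blocks ∧ B ≠ P.B₁ ∧ B ≠ P.B₂) := by
  simp only [blocks, mem_insert, mem_erase]
  tauto

lemma disjoint_union_of_mem {B : Finset (Fin N)} (hB : B ∈ E.blocks) (h₁ : B ≠ P.B₁)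
    (h₂ : B ≠ P.B₂) : Disjoint B (P.B₁ ∪ P.B₂) :=
  disjoint_union_right.mpr ⟨E.disjoint_of_ne hB P.mem₁ h₁, E.disjoint_of_ne hB P.mem₂ h₂⟩

lemma eq_or_eq_of_subset_union {B : Finset (Fin N)} (hB : B ∈ E.blocks)
    (h : B ⊆ P.B₁ ∪ P.B₂) : B = P.B₁ ∨ B = P.B₂ := by
  by_contra! hne
  obtain ⟨x, hx⟩ := E.nonempty_blocks B hB
  exact disjoint_left.mp (P.disjoint_union_of_mem hB hne.1 hne.2) hx (h hx)

lemma disjoint_attachment {B S : Finset (Fin N)} (hB : B ∈ E.blocks) (hS : S ⊆ B) :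
    Disjoint B (P.attachment S) := by
  unfold attachment
  split_ifs with hu hv
  · rw [E.eq_of_mem_of_mem hB P.mem₁ (hS hu) P.root₁]
    exact E.disjoint_of_ne P.mem₁ P.mem₂ P.ne
  · rw [E.eq_of_mem_of_mem hB P.mem₂ (hS hv) P.root₂]
    exact E.disjoint_of_ne P.mem₂ P.mem₁ P.ne.symm
  · exact disjoint_empty_right B

lemma restrict_graft {e : Split N} (he : e ∈ E.splits) :
    restrict (P.graft e) (blockOf e) = e := by
  conv_rhs => rw [← restrict_blockOf e]
  simp only [restrict, graft, Sym2.map_map]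
  refine Sym2.map_congr fun S hS => ?_
  have hSB := subset_blockOf hS
  rw [Function.comp_apply, union_inter_distrib_right,
    disjoint_iff_inter_eq_empty.mp (P.disjoint_attachment (E.isSplitOf_blockOf he).1 hSB).symm,
    union_empty]

lemma exists_graft_eq {e : Split N} (he : e ∈ E.splits) :
    ∃ A C, e = s(A, C) ∧ A ∪ C = blockOf e ∧ Disjoint A C ∧ A.Nonempty ∧ C.Nonempty ∧
      P.u ∉ A ∧ P.v ∉ A ∧ P.graft e = s(A, C ∪ P.attachment C) := by
  obtain ⟨hB, hs⟩ := E.isSplitOf_blockOf he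
  set B := blockOf e
  obtain ⟨w, hwB, hwu, hwv⟩ : ∃ w ∈ B, (P.u ∈ B → w = P.u) ∧ (P.v ∈ B → w = P.v) := by
    by_cases hu : P.u ∈ B
    · have hv : P.v ∉ B := fun hv =>
        P.ne ((E.eq_of_mem_of_mem hB P.mem₁ hu P.root₁).symm.trans
          (E.eq_of_mem_of_mem hB P.mem₂ hv P.root₂))
      exact ⟨P.u, hu, fun _ => rfl, fun h => absurd h hv⟩
    by_cases hv : P.v ∈ B
    · exact ⟨P.v, hv, fun h => absurd h hu, fun _ => rfl⟩
    obtain ⟨w, hw⟩ := E.nonempty_blocks B hB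
    exact ⟨w, hw, fun h => absurd h hu, fun h => absurd h hv⟩
  obtain ⟨A, C, rfl, hAC, hdisj, hA, hC, hwC⟩ := hs.exists_mk_of_mem hwB
  have hnotA : ∀ x, (x ∈ B → w = x) → x ∉ A := fun x hx hxA =>
    disjoint_left.mp hdisj hxA (hx (hAC ▸ mem_union_left C hxA) ▸ hwC)
  have huA := hnotA P.u hwu
  have hvA := hnotA P.v hwv
  refine ⟨A, C, rfl, hAC, hdisj, hA, hC, huA, hvA, ?_⟩
  simp [graft, attachment, huA, hvA]

lemma injOn_graft : Set.InjOn P.graft E.splits := by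
  intro e he f hf h
  by_cases hef : blockOf e = blockOf f
  · rw [← P.restrict_graft he, ← P.restrict_graft hf, h, hef]
  obtain ⟨A, C, -, hAC, -, -, -, -, -, hgf⟩ := P.exists_graft_eq hf
  refine absurd ?_ (E.isSplitOf_blockOf he).2.empty_notMem
  rw [← P.restrict_graft he, h, hgf, restrict_mk, Sym2.mem_iff]
  refine Or.inl (disjoint_iff_inter_eq_empty.mp ?_).symm
  exact (E.disjoint_of_ne (E.isSplitOf_blockOf hf).1 (E.isSplitOf_blockOf he).1
    (Ne.symm hef)).mono_left (hAC ▸ subset_union_left)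

lemma mk_notMem_image_graft : s(P.B₁, P.B₂) ∉ E.splits.image P.graft := by
  intro h
  obtain ⟨e, he, hge⟩ := mem_image.mp h
  obtain ⟨hB, hs⟩ := E.isSplitOf_blockOf he
  refine hs.empty_notMem ?_
  rw [← P.restrict_graft he, hge, restrict_mk, Sym2.mem_iff]
  by_cases h₁ : blockOf e = P.B₁
  · exact Or.inr (by rw [h₁, disjoint_iff_inter_eq_empty.mp (E.disjoint_of_ne P.mem₂ P.mem₁ P.ne.symm)])
  · exact Or.inl (disjoint_iff_inter_eq_empty.mp (E.disjoint_of_ne P.mem₁ hB (Ne.symm h₁))).symm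

lemma card_splits : P.splits.card = E.splits.card + 1 := by
  rw [splits, card_insert_of_notMem P.mk_notMem_image_graft, card_image_of_injOn P.injOn_graft]

lemma isSplitOf_graft {e : Split N} (he : e ∈ E.splits) :
    ∃ B ∈ P.blocks, IsSplitOf (P.graft e) B := by
  obtain ⟨A, C, rfl, -, hdisj, hA, hC, huA, hvA, hge⟩ := P.exists_graft_eq he
  have hB : A ∪ C ∈ E.blocks := (E.isSplitOf_blockOf he).1
  refine ⟨A ∪ C ∪ P.attachment C, ?_, A, C ∪ P.attachment C, hge, (union_assoc _ _ _).symm,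
    disjoint_union_right.mpr ⟨hdisj,
      (P.disjoint_attachment hB subset_union_right).mono_left subset_union_left⟩,
    hA, hC.mono subset_union_left⟩
  rw [mem_blocks]
  unfold attachment
  split_ifs with hu hv
  · rw [E.eq_of_mem_of_mem hB P.mem₁ (mem_union_right A hu) P.root₁]
    exact Or.inl rfl
  · rw [E.eq_of_mem_of_mem hB P.mem₂ (mem_union_right A hv) P.root₂, union_comm]
    exact Or.inl rfl
  · refine Or.inr ⟨by rwa [union_empty], fun h => ?_, fun h => ?_⟩
    · exact (mem_union.mp (union_empty (A ∪ C) ▸ h ▸ P.root₁)).elim huA hu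
    · exact (mem_union.mp (union_empty (A ∪ C) ▸ h ▸ P.root₂)).elim hvA hv

lemma compatible_graft {e f : Split N} (he : e ∈ E.splits) (hf : f ∈ E.splits) :
    Compatible (P.graft e) (P.graft f) := by
  obtain ⟨A, C, rfl, hAC, -, -, -, huA, hvA, hge⟩ := P.exists_graft_eq he
  obtain ⟨A', C', rfl, hAC', -, -, -, huA', hvA', hgf⟩ := P.exists_graft_eq hf
  have hB := (E.isSplitOf_blockOf he).1
  have hB' := (E.isSplitOf_blockOf hf).1
  rw [hge, hgf]
  by_cases hbl : blockOf s(A, C) = blockOf s(A', C')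
  · have hiff : ∀ x, x ∉ A → x ∉ A' → (x ∈ C ↔ x ∈ C') := fun x hx hx' => by
      rw [blockOf_mk, blockOf_mk] at hbl
      have := congrArg (x ∈ ·) hbl
      simp only [mem_union, eq_iff_iff] at this
      tauto
    have hatt : P.attachment C' = P.attachment C := by
      simp only [attachment, hiff P.u huA huA', hiff P.v hvA hvA']
    have hdA : Disjoint A (P.attachment C) :=
      (P.disjoint_attachment hB subset_union_right).mono_left subset_union_left
    have hdA' : Disjoint A' (P.attachment C') :=
      (P.disjoint_attachment hB' subset_union_right).mono_left subset_union_left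
    rw [hatt] at hdA' ⊢
    refine (E.compat _ he _ hf hbl).union hdA hdA' fun hX => ?_
    unfold attachment at hX
    split_ifs at hX with hu hv
    · exact not_disjoint_iff.mpr ⟨P.u, hu, (hiff P.u huA huA').mp hu⟩
    · exact not_disjoint_iff.mpr ⟨P.v, hv, (hiff P.v hvA hvA').mp hv⟩
    · exact absurd hX not_nonempty_empty
  · refine compatible_mk_iff.mpr (Or.inl ?_)
    exact (E.disjoint_of_ne hB hB' hbl).mono subset_union_left subset_union_left

lemma compatible_mk_graft {f : Split N} (hf : f ∈ E.splits) :
    Compatible s(P.B₁, P.B₂) (P.graft f) := by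
  obtain ⟨A, C, rfl, -, -, -, -, -, -, hgf⟩ := P.exists_graft_eq hf
  have hB := (E.isSplitOf_blockOf hf).1
  rw [hgf, compatible_mk_iff]
  by_cases h₁ : A ∪ C = P.B₁
  · exact Or.inr (Or.inr (Or.inl ((E.disjoint_of_ne P.mem₂ hB fun h => P.ne (h.trans h₁).symm).mono_right
      subset_union_left)))
  · exact Or.inl ((E.disjoint_of_ne P.mem₁ hB (Ne.symm h₁)).mono_right subset_union_left)

lemma separates_graft {e : Split N} {x y : Fin N} (h : Separates e x y) :
    Separates (P.graft e) x y := by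
  obtain ⟨S, T, rfl, hx, hy⟩ := h
  exact ⟨_, _, Sym2.map_mk _ _ _, mem_union_left _ hx, mem_union_left _ hy⟩

lemma cover (x : Fin N) : ∃! B, B ∈ P.blocks ∧ x ∈ B := by
  obtain ⟨B, ⟨hB, hx⟩, -⟩ := E.cover x
  have hnot : ∀ B' ∈ E.blocks, B' ≠ P.B₁ → B' ≠ P.B₂ → x ∈ B' → x ∉ P.B₁ ∪ P.B₂ :=
    fun B' hB' h₁ h₂ hx => disjoint_left.mp (P.disjoint_union_of_mem hB' h₁ h₂) hx
  refine ⟨if B = P.B₁ ∨ B = P.B₂ then P.B₁ ∪ P.B₂ else B, ?_, ?_⟩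
  · split_ifs with h
    · refine ⟨P.mem_blocks.mpr (Or.inl rfl), ?_⟩
      rcases h with rfl | rfl
      exacts [mem_union_left _ hx, mem_union_right _ hx]
    · push Not at h
      exact ⟨P.mem_blocks.mpr (Or.inr ⟨hB, h⟩), hx⟩
  · rintro B' ⟨hB', hx'⟩
    split_ifs with h
    · rcases P.mem_blocks.mp hB' with rfl | ⟨hB', h₁, h₂⟩
      · rfl
      · rcases h with rfl | rfl
        · exact absurd (mem_union_left _ hx) (hnot B' hB' h₁ h₂ hx')
        · exact absurd (mem_union_right _ hx) (hnot B' hB' h₁ h₂ hx')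
    · push Not at h
      rcases P.mem_blocks.mp hB' with rfl | ⟨hB', -⟩
      · exact absurd hx' (hnot B hB h.1 h.2 hx)
      · exact E.eq_of_mem_of_mem hB' hB hx' hx

lemma exists_separates {B : Finset (Fin N)} (hB : B ∈ P.blocks) {x y : Fin N} (hx : x ∈ B)
    (hy : y ∈ B) (hxy : x ≠ y) : ∃ e ∈ P.splits, Separates e x y := by
  have hlift : ∀ B' ∈ E.blocks, x ∈ B' → y ∈ B' → ∃ e ∈ P.splits, Separates e x y :=
    fun B' hB' hx hy => by
      obtain ⟨e, he, hsep⟩ := E.separating B' hB' x hx y hy hxy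
      exact ⟨P.graft e, mem_insert_of_mem (mem_image_of_mem _ he), P.separates_graft hsep⟩
  have he₀ : s(P.B₁, P.B₂) ∈ P.splits := mem_insert_self _ _
  rcases P.mem_blocks.mp hB with rfl | ⟨hB, -⟩
  · rcases mem_union.mp hx with hx | hx <;> rcases mem_union.mp hy with hy | hy
    · exact hlift _ P.mem₁ hx hy
    · exact ⟨_, he₀, _, _, rfl, hx, hy⟩
    · exact ⟨_, he₀, _, _, Sym2.eq_swap, hx, hy⟩
    · exact hlift _ P.mem₂ hx hy
  · exact hlift B hB hx hy

def toWaldTop : WaldTop N where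
  blocks := P.blocks
  splits := P.splits
  nonempty_blocks B hB := by
    rcases P.mem_blocks.mp hB with rfl | ⟨hB, -⟩
    · exact ⟨P.u, mem_union_left _ P.root₁⟩
    · exact E.nonempty_blocks B hB
  cover := P.cover
  split_mem e he := by
    rcases mem_insert.mp he with rfl | he
    · exact ⟨_, P.mem_blocks.mpr (Or.inl rfl), P.B₁, P.B₂, rfl, rfl,
        E.disjoint_of_ne P.mem₁ P.mem₂ P.ne, ⟨P.u, P.root₁⟩, ⟨P.v, P.root₂⟩⟩
    · obtain ⟨e, he', rfl⟩ := mem_image.mp he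
      exact P.isSplitOf_graft he'
  compat e he f hf _ := by
    rcases mem_insert.mp he with rfl | he <;> rcases mem_insert.mp hf with rfl | hf
    · exact compatible_mk_iff.mpr (Or.inr (Or.inl (E.disjoint_of_ne P.mem₁ P.mem₂ P.ne)))
    · obtain ⟨f, hf', rfl⟩ := mem_image.mp hf
      exact P.compatible_mk_graft hf'
    · obtain ⟨e, he', rfl⟩ := mem_image.mp he
      exact (P.compatible_mk_graft he').symm
    · obtain ⟨e, he', rfl⟩ := mem_image.mp he
      obtain ⟨f, hf', rfl⟩ := mem_image.mp hf
      exact P.compatible_graft he' hf'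
  separating _ hB _ hx _ hy hxy := P.exists_separates hB hx hy hxy

lemma le_toWaldTop : LE' E P.toWaldTop := by
  refine ⟨fun B hB => ?_, fun e he => ⟨P.graft e, mem_insert_of_mem (mem_image_of_mem _ he),
    P.restrict_graft he⟩, ?_⟩
  · by_cases h : B = P.B₁ ∨ B = P.B₂
    · refine ⟨P.B₁ ∪ P.B₂, P.mem_blocks.mpr (Or.inl rfl), ?_⟩
      rcases h with rfl | rfl
      exacts [subset_union_left, subset_union_right]
    · push Not at h
      exact ⟨B, P.mem_blocks.mpr (Or.inr ⟨hB, h⟩), subset_rfl⟩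
  · intro Ba hBa Bb hBb hab B hB ha hb
    rcases P.mem_blocks.mp hB with rfl | ⟨hB, -⟩
    · have he₀ : s(P.B₁, P.B₂) ∈ P.splits := mem_insert_self _ _
      rcases P.eq_or_eq_of_subset_union hBa ha with rfl | rfl <;>
        rcases P.eq_or_eq_of_subset_union hBb hb with rfl | rfl
      · exact absurd rfl hab
      · exact ⟨_, _, he₀, subset_rfl, subset_rfl⟩
      · exact ⟨_, _, Sym2.eq_swap ▸ he₀, subset_rfl, subset_rfl⟩
      · exact absurd rfl hab
    · exact absurd ((E.eq_of_subset hBa hB ha).trans (E.eq_of_subset hBb hB hb).symm) hab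

end WaldTop.RootedPair

theorem WaldTop.exists_extension_of_ne (E : WaldTop N) {B₁ B₂ : Finset (Fin N)}
    (h₁ : B₁ ∈ E.blocks) (h₂ : B₂ ∈ E.blocks) (h : B₁ ≠ B₂) :
    ∃ E' : WaldTop N, E'.splits.card = E.splits.card + 1 ∧ LE' E E' ∧ E' ≠ E := by
  obtain ⟨u, hu⟩ := E.nonempty_blocks B₁ h₁
  obtain ⟨v, hv⟩ := E.nonempty_blocks B₂ h₂
  let P : E.RootedPair := ⟨B₁, B₂, u, v, h₁, h₂, h, hu, hv⟩
  exact ⟨P.toWaldTop, P.card_splits, P.le_toWaldTop, E.ne_of_card_splits P.card_splits⟩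

end Wald

open Wald in
theorem stmt_14_general {N : ℕ} (E' : WaldTop N)
    (hcard : E'.splits.card < 2 * N - 3) :
    ∃ E : WaldTop N, E.splits.card = E'.splits.card + 1 ∧ LE' E' E ∧ E ≠ E' := by
  obtain ⟨B, ⟨hB, -⟩, -⟩ := E'.cover ⟨0, by omega⟩
  rcases Finset.Nonempty.exists_eq_singleton_or_nontrivial ⟨B, hB⟩ with
    ⟨B, hb⟩ | ⟨B₁, h₁, B₂, h₂, h⟩
  · exact E'.exists_extension_of_blocks_eq (E'.eq_univ_of_blocks_eq hb ▸ hb) hcard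
  · exact E'.exists_extension_of_ne h₁ h₂ h

open Wald in
/-- Every wald topology `E'` with fewer than `2N−3` splits can be
extended: there is a wald topology `E` with one more split and `E' < E`. -/
theorem stmt_14 {N : ℕ} (hN : 3 ≤ N) (E' : WaldTop N)
    (hcard : E'.splits.card < 2 * N - 3) :
    ∃ E : WaldTop N, E.splits.card = E'.splits.card + 1 ∧ LE' E' E ∧ E ≠ E' :=
  stmt_14_general E' hcard
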